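/- arXiv:1609.02854 — 4 statements merged into one kernel-verified Lean document; each statement's English description precedes it below -/
import Mathlib

section
/- If (x_n) is a bounded sequence of real numbers, then (1 + x_n/n)^{n²} / exp(n·x_n - x_n²/2) → 1 as n → ∞ (for n large enough that 1 + x_n/n > 0). -/
/-!
Write `t = x n / n`. Taking logarithms, the quotient is `exp (n² · (log (1 + t) - t + t² / 2))`,
and the second-order Taylor estimate `|log (1 + t) - t + t² / 2| ≤ 2 |t|³` for `|t| ≤ 1/2`
bounds the exponent by `2 C³ / n`, which tends to `0`.
-/

open Filter Real

lemma abs_log_one_add_sub_add_sq_div_two_le {t : ℝ} (ht : |t| ≤ 1 / 2) :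
    |log (1 + t) - t + t ^ 2 / 2| ≤ 2 * |t| ^ 3 := by
  have hlog := abs_log_sub_add_sum_range_le (x := -t) (by rw [abs_neg]; linarith) 2
  have hsum : ∑ i ∈ Finset.range 2, (-t) ^ (i + 1) / (i + 1) = -t + t ^ 2 / 2 := by
    norm_num [Finset.sum_range_succ]
  rw [hsum, abs_neg, sub_neg_eq_add] at hlog
  calc |log (1 + t) - t + t ^ 2 / 2|
      = |-t + t ^ 2 / 2 + log (1 + t)| := by ring_nf
    _ ≤ |t| ^ 3 / (1 - |t|) := hlog
    _ ≤ 2 * |t| ^ 3 := by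
      rw [div_le_iff₀ (by linarith)]
      nlinarith [pow_nonneg (abs_nonneg t) 3]

lemma abs_sq_mul_log_one_add_div_sub_le {y r : ℝ} (hr : 0 < r) (hy : 2 * |y| ≤ r) :
    |r ^ 2 * log (1 + y / r) - (r * y - y ^ 2 / 2)| ≤ 2 * |y| ^ 3 / r := by
  have hyr : |y / r| ≤ 1 / 2 := by
    rw [abs_div, abs_of_pos hr, div_le_iff₀ hr]
    linarith
  calc |r ^ 2 * log (1 + y / r) - (r * y - y ^ 2 / 2)|
      = r ^ 2 * |log (1 + y / r) - y / r + (y / r) ^ 2 / 2| := by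
        rw [← abs_of_pos (pow_pos hr 2), ← abs_mul, abs_of_pos (pow_pos hr 2)]
        congr 1
        field_simp
        ring
    _ ≤ r ^ 2 * (2 * |y / r| ^ 3) := by
        gcongr
        exact abs_log_one_add_sub_add_sq_div_two_le hyr
    _ = 2 * |y| ^ 3 / r := by
        rw [abs_div, abs_of_pos hr]
        field_simp

lemma one_add_div_pos {y r : ℝ} (hr : 0 < r) (hy : |y| < r) : 0 < 1 + y / r := by
  have : -1 < y / r := by
    rw [lt_div_iff₀ hr]
    linarith [neg_abs_le y]
  linarith

lemma one_add_div_pow_div_exp_eq {y : ℝ} (n : ℕ) (h : 0 < 1 + y / n) :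
    (1 + y / n) ^ (n ^ 2) / exp (n * y - y ^ 2 / 2) =
      exp ((n : ℝ) ^ 2 * log (1 + y / n) - (n * y - y ^ 2 / 2)) := by
  have hpow : (1 + y / n) ^ (n ^ 2) = exp ((n : ℝ) ^ 2 * log (1 + y / n)) := by
    rw [← Nat.cast_pow, exp_nat_mul, exp_log h]
  rw [hpow, ← exp_sub]

theorem pow_div_exp_tendsto_one (x : ℕ → ℝ) (C : ℝ) (hC : ∀ n, |x n| ≤ C) :
    Tendsto (fun n : ℕ =>
        (1 + x n / n) ^ (n ^ 2) / Real.exp (n * x n - (x n) ^ 2 / 2))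
      atTop (nhds 1) := by
  have hlarge : ∀ᶠ n : ℕ in atTop, 0 < (n : ℝ) ∧ 2 * |x n| < n := by
    filter_upwards [tendsto_natCast_atTop_atTop.eventually_gt_atTop (2 * C)] with n hn
    exact ⟨by linarith [abs_nonneg (x n), hC n], by linarith [hC n]⟩
  have hexponent : Tendsto (fun n : ℕ =>
      (n : ℝ) ^ 2 * log (1 + x n / n) - (n * x n - x n ^ 2 / 2)) atTop (nhds 0) := by
    refine squeeze_zero_norm' ?_
      ((tendsto_const_nhds (x := 2 * C ^ 3)).div_atTop tendsto_natCast_atTop_atTop)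
    filter_upwards [hlarge] with n ⟨hn, hxn⟩
    calc _ ≤ 2 * |x n| ^ 3 / n := abs_sq_mul_log_one_add_div_sub_le hn hxn.le
      _ ≤ 2 * C ^ 3 / n := by gcongr; exact hC n
  refine (tendsto_exp_nhds_zero_nhds_one.comp hexponent).congr' ?_
  filter_upwards [hlarge] with n ⟨hn, hxn⟩
  rw [Function.comp_apply, one_add_div_pow_div_exp_eq n
    (one_add_div_pos hn (by linarith [abs_nonneg (x n)]))]
end

section
/- Let X₁, …, X_m be independent mean-zero random variables with E[X_j²] = v for all j, and let w, x be two closed words of length k+1 whose induced cycle graphs have the same edge set. Then E[∏_{e ∈ E_w} Y_e · ∏_{e ∈ E_x} Y_e] = v^k, where (Y_e) are i.i.d. mean-zero random variables indexed by edges with variance v. More generally, if G_w and G_x do not have identical edge sets then some edge variable appears exactly once in the product and the expectation is 0. -/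
open MeasureTheory ProbabilityTheory Finset

/-- The edge multiset (as a finset) of the cycle induced by a closed word `w`. -/
def cycleEdgeFinset (k : ℕ) [NeZero k] {V : Type*} [DecidableEq V]
    (w : ZMod k → V) : Finset (Sym2 V) :=
  Finset.image (fun j : ZMod k => s(w j, w (j + 1))) Finset.univ

/-!
Writing the integrand as `∏_{e ∈ E_w ∪ E_x} Y_e ^ m_e`, where `m_e ∈ {1, 2}` is the multiplicity of
`e` in `E_w + E_x`, independence factors the expectation into `∏ E[Y_e ^ m_e]`. If the edge sets
agree, every `m_e = 2` and the product is `v ^ #E_w = v ^ k`, a cycle on `k ≥ 3` distinct vertices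
having `k` distinct edges; otherwise some `m_e = 1` and that factor is `E[Y_e] = 0`.
-/

namespace ProbabilityTheory

variable {Ω ι : Type*} [MeasurableSpace Ω] {μ : Measure Ω} {X : ι → Ω → ℝ}

theorem iIndepFun.integral_finset_prod_comp (hX : iIndepFun X μ) (mX : ∀ i, AEMeasurable (X i) μ)
    {f : ι → ℝ → ℝ} (hf : ∀ i, Measurable (f i)) (s : Finset ι) :
    ∫ ω, ∏ i ∈ s, f i (X i ω) ∂μ = ∏ i ∈ s, ∫ ω, f i (X i ω) ∂μ := by
  have hXs : iIndepFun (fun i : s => X i) μ := hX.precomp Subtype.val_injective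
  simp_rw [← prod_coe_sort s]
  exact hXs.integral_fun_prod_comp (fun i => mX i) (fun i => (hf i).aestronglyMeasurable)

theorem iIndepFun.integral_multiset_prod [DecidableEq ι] (hX : iIndepFun X μ)
    (mX : ∀ i, AEMeasurable (X i) μ) (m : Multiset ι) :
    ∫ ω, (m.map (X · ω)).prod ∂μ = ∏ i ∈ m.toFinset, ∫ ω, X i ω ^ m.count i ∂μ := by
  simp only [Finset.prod_multiset_map_count]
  exact hX.integral_finset_prod_comp mX (fun i => measurable_id.pow_const _) _

theorem iIndepFun.integral_prod_mul_prod [DecidableEq ι] (hX : iIndepFun X μ)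
    (mX : ∀ i, AEMeasurable (X i) μ) (s t : Finset ι) :
    ∫ ω, (∏ i ∈ s, X i ω) * ∏ i ∈ t, X i ω ∂μ
      = ∏ i ∈ s ∪ t, ∫ ω, X i ω ^ (s.val + t.val).count i ∂μ := by
  have hprod : ∀ ω, (∏ i ∈ s, X i ω) * ∏ i ∈ t, X i ω = ((s.val + t.val).map (X · ω)).prod :=
    fun ω => by rw [Multiset.map_add, Multiset.prod_add]; rfl
  simp only [hprod]
  rw [hX.integral_multiset_prod mX, Multiset.toFinset_add, val_toFinset, val_toFinset]

theorem iIndepFun.integral_prod_mul_prod_self (hX : iIndepFun X μ) (mX : ∀ i, AEMeasurable (X i) μ)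
    (s : Finset ι) :
    ∫ ω, (∏ i ∈ s, X i ω) * ∏ i ∈ s, X i ω ∂μ = ∏ i ∈ s, ∫ ω, X i ω ^ 2 ∂μ := by
  simp only [← sq, ← prod_pow]
  exact hX.integral_finset_prod_comp mX (f := fun _ t => t ^ 2) (fun _ => by fun_prop) s

theorem iIndepFun.integral_prod_mul_prod_eq_zero_of_ne [DecidableEq ι] (hX : iIndepFun X μ)
    (mX : ∀ i, AEMeasurable (X i) μ) (hmean : ∀ i, ∫ ω, X i ω ∂μ = 0) {s t : Finset ι}
    (hst : s ≠ t) :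
    ∫ ω, (∏ i ∈ s, X i ω) * ∏ i ∈ t, X i ω ∂μ = 0 := by
  obtain ⟨i, hi⟩ : ∃ i, ¬(i ∈ s ↔ i ∈ t) := by
    simpa only [Ne, Finset.ext_iff, not_forall] using hst
  have hcount : (s.val + t.val).count i = 1 := by
    rw [Multiset.count_add, Multiset.count_eq_of_nodup s.nodup, Multiset.count_eq_of_nodup t.nodup]
    split_ifs <;> first | rfl | tauto
  rw [hX.integral_prod_mul_prod mX]
  refine prod_eq_zero (i := i) (by rw [mem_union]; tauto) ?_
  simp only [hcount, pow_one, hmean]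

end ProbabilityTheory

theorem cycleEdgeFinset_card {k : ℕ} [NeZero k] (hk : 3 ≤ k) {V : Type*} [DecidableEq V]
    {w : ZMod k → V} (hw : Function.Injective w) : (cycleEdgeFinset k w).card = k := by
  have hinj : Function.Injective (fun j : ZMod k => s(w j, w (j + 1))) := by
    intro i j h
    rcases Sym2.eq_iff.mp h with ⟨h1, _⟩ | ⟨h1, h2⟩
    · exact hw h1
    · -- a 2-cycle: `i = j + 1` and `j = i + 1` force `k ∣ 2`
      have h2z : ((2 : ℕ) : ZMod k) = 0 := by
        push_cast; linear_combination hw h2 - hw h1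
      have := Nat.le_of_dvd two_pos ((ZMod.natCast_eq_zero_iff 2 k).mp h2z)
      omega
  rw [cycleEdgeFinset, card_image_of_injective _ hinj, card_univ, ZMod.card]

theorem paired_words_expectation_general
    {Ω : Type*} [MeasurableSpace Ω] (μ : Measure Ω)
    {V : Type*} [DecidableEq V]
    (k : ℕ) [NeZero k] (hk : 3 ≤ k) (v : ℝ)
    (Y : Sym2 V → Ω → ℝ)
    (hmeas : ∀ e, Measurable (Y e))
    (hindep : iIndepFun Y μ)
    (hmean : ∀ e, ∫ ω, Y e ω ∂μ = 0)
    (hvar : ∀ e, ∫ ω, (Y e ω) ^ 2 ∂μ = v)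
    (w x : ZMod k → V) (hw : Function.Injective w) :
    (cycleEdgeFinset k w = cycleEdgeFinset k x →
      ∫ ω, (∏ e ∈ cycleEdgeFinset k w, Y e ω) * (∏ e ∈ cycleEdgeFinset k x, Y e ω) ∂μ
        = v ^ k) ∧
    (cycleEdgeFinset k w ≠ cycleEdgeFinset k x →
      ∫ ω, (∏ e ∈ cycleEdgeFinset k w, Y e ω) * (∏ e ∈ cycleEdgeFinset k x, Y e ω) ∂μ
        = 0) := by
  have mY : ∀ e, AEMeasurable (Y e) μ := fun e => (hmeas e).aemeasurable
  refine ⟨fun h => ?_, hindep.integral_prod_mul_prod_eq_zero_of_ne mY hmean⟩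
  rw [← h, hindep.integral_prod_mul_prod_self mY, prod_congr rfl fun e _ => hvar e, prod_const,
    cycleEdgeFinset_card hk hw]

theorem paired_words_expectation
    {Ω : Type*} [MeasurableSpace Ω] (μ : Measure Ω) [IsProbabilityMeasure μ]
    {V : Type*} [MeasurableSpace (Sym2 V)] [DecidableEq V]
    (k : ℕ) [NeZero k] (hk : 3 ≤ k) (v : ℝ)
    (Y : Sym2 V → Ω → ℝ)
    (hmeas : ∀ e, Measurable (Y e))
    (hL2 : ∀ e, MemLp (Y e) 2 μ)
    (hindep : iIndepFun Y μ)
    (hmean : ∀ e, ∫ ω, Y e ω ∂μ = 0)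
    (hvar : ∀ e, ∫ ω, (Y e ω) ^ 2 ∂μ = v)
    (w x : ZMod k → V) (hw : Function.Injective w) (hx : Function.Injective x) :
    (cycleEdgeFinset k w = cycleEdgeFinset k x →
      ∫ ω, (∏ e ∈ cycleEdgeFinset k w, Y e ω) * (∏ e ∈ cycleEdgeFinset k x, Y e ω) ∂μ
        = v ^ k) ∧
    (cycleEdgeFinset k w ≠ cycleEdgeFinset k x →
      ∫ ω, (∏ e ∈ cycleEdgeFinset k w, Y e ω) * (∏ e ∈ cycleEdgeFinset k x, Y e ω) ∂μ
        = 0) :=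
  paired_words_expectation_general μ k hk v Y hmeas hindep hmean hvar w x hw
end

section
/- For t ∈ [0,1), the average (1/2^{2n})·∑_{σ,τ ∈ {±1}^n} exp(t·n·ρ(σ,τ)²/2), where ρ(σ,τ) = (1/n)∑_i σ_i τ_i, converges to 1/√(1-t) as n → ∞. -/
open Filter

/-- The sign `±1` attached to a Boolean label. -/
def sgn (b : Bool) : ℝ := if b then 1 else -1

section Helpers

open MeasureTheory Real

lemma one_add_half_sq_le_cosh (x : ℝ) : 1 + x ^ 2 / 2 ≤ Real.cosh x := by
  have h := Real.hasSum_cosh x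
  have key := sum_le_hasSum ({0, 1} : Finset ℕ)
    (fun i _ => div_nonneg ((even_two_mul i).pow_nonneg x) (by positivity)) h
  norm_num [Nat.factorial] at key
  linarith

lemma pow_cosh_tendsto (a : ℝ) :
    Tendsto (fun n : ℕ => Real.cosh (a / Real.sqrt n) ^ n) atTop
      (nhds (Real.exp (a ^ 2 / 2))) := by
  have hlow : Tendsto (fun n : ℕ => (1 + (a ^ 2 / 2) / n) ^ n) atTop
      (nhds (Real.exp (a ^ 2 / 2))) := Real.tendsto_one_add_div_pow_exp (a ^ 2 / 2)
  refine tendsto_of_tendsto_of_tendsto_of_le_of_le' hlow tendsto_const_nhds ?_ ?_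
  · filter_upwards [eventually_ge_atTop 1] with n hn
    have hn0 : (0:ℝ) < n := by exact_mod_cast hn
    have hsq : (a / Real.sqrt n) ^ 2 = a ^ 2 / n := by
      rw [div_pow, Real.sq_sqrt hn0.le]
    have h1 : 1 + (a ^ 2 / 2) / n ≤ Real.cosh (a / Real.sqrt n) := by
      have h2 := one_add_half_sq_le_cosh (a / Real.sqrt n)
      rw [hsq] at h2
      calc 1 + a ^ 2 / 2 / n = 1 + a ^ 2 / n / 2 := by ring
        _ ≤ _ := h2
    exact pow_le_pow_left₀ (by positivity) h1 n
  · filter_upwards [eventually_ge_atTop 1] with n hn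
    have hn0 : (0:ℝ) < n := by exact_mod_cast hn
    have hsq : (a / Real.sqrt n) ^ 2 = a ^ 2 / n := by
      rw [div_pow, Real.sq_sqrt hn0.le]
    calc Real.cosh (a / Real.sqrt n) ^ n
        ≤ Real.exp ((a / Real.sqrt n) ^ 2 / 2) ^ n :=
          pow_le_pow_left₀ (Real.cosh_pos _).le (Real.cosh_le_exp_half_sq _) n
      _ = Real.exp ((n : ℝ) * (a ^ 2 / n / 2)) := by rw [← Real.exp_nat_mul, hsq]
      _ = Real.exp (a ^ 2 / 2) := by congr 1; field_simp

lemma integral_exp_linear_quad (b : ℝ) :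
    ∫ x : ℝ, Real.exp (b * x - x ^ 2 / 2)
      = Real.sqrt (2 * Real.pi) * Real.exp (b ^ 2 / 2) := by
  have key : ∀ x : ℝ, Real.exp (b * x - x ^ 2 / 2)
      = Real.exp (b ^ 2 / 2) * Real.exp (-(1/2) * (x - b) ^ 2) := by
    intro x; rw [← Real.exp_add]; congr 1; ring
  simp_rw [key]
  rw [MeasureTheory.integral_const_mul,
    MeasureTheory.integral_sub_right_eq_self (fun x : ℝ => Real.exp (-(1/2) * x ^ 2)) b,
    integral_gaussian, show Real.pi / (1/2) = 2 * Real.pi by ring, mul_comm]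

lemma integrable_exp_linear_quad (b : ℝ) :
    MeasureTheory.Integrable (fun x : ℝ => Real.exp (b * x - x ^ 2 / 2)) := by
  have key : (fun x : ℝ => Real.exp (b * x - x ^ 2 / 2))
      = fun x : ℝ => Real.exp (b ^ 2 / 2) * Real.exp (-(1/2) * (x - b) ^ 2) := by
    funext x; rw [← Real.exp_add]; congr 1; ring
  rw [key]
  exact ((integrable_exp_neg_mul_sq (by norm_num : (0:ℝ) < 1/2)).comp_sub_right b).const_mul _

lemma sgn_mul_sgn (a b : Bool) : sgn a * sgn b = sgn (a == b) := by
  cases a <;> cases b <;> norm_num [sgn]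

lemma avg_stepA (t : ℝ) (n : ℕ) :
    (1 / 2 ^ (2 * n) : ℝ) * ∑ σ : Fin n → Bool, ∑ τ : Fin n → Bool,
        Real.exp (t * n * ((1 / (n : ℝ)) * ∑ i, sgn (σ i) * sgn (τ i)) ^ 2 / 2)
      = (1 / 2 ^ n : ℝ) * ∑ τ : Fin n → Bool,
        Real.exp (t * n * ((1 / (n : ℝ)) * ∑ i, sgn (τ i)) ^ 2 / 2) := by
  have hinner : ∀ σ : Fin n → Bool,
      ∑ τ : Fin n → Bool,
        Real.exp (t * n * ((1 / (n : ℝ)) * ∑ i, sgn (σ i) * sgn (τ i)) ^ 2 / 2)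
      = ∑ τ : Fin n → Bool,
        Real.exp (t * n * ((1 / (n : ℝ)) * ∑ i, sgn (τ i)) ^ 2 / 2) := by
    intro σ
    have hinv : Function.Involutive (fun τ : Fin n → Bool => fun i => σ i == τ i) := by
      intro τ; funext i; show (σ i == (σ i == τ i)) = τ i
      cases σ i <;> cases τ i <;> rfl
    refine Fintype.sum_equiv hinv.toPerm _ _ ?_
    intro τ
    have h : ∀ i, sgn (σ i) * sgn (τ i) = sgn (σ i == τ i) := fun i => sgn_mul_sgn _ _
    simp only [Function.Involutive.coe_toPerm]
    rw [Finset.sum_congr rfl fun i _ => h i]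
  rw [Finset.sum_congr rfl fun σ _ => hinner σ, Finset.sum_const, Finset.card_univ]
  have hcard : Fintype.card (Fin n → Bool) = 2 ^ n := by
    simp [Fintype.card_fun]
  rw [hcard, nsmul_eq_mul]
  push_cast
  rw [two_mul, pow_add]
  have h2 : (2 : ℝ) ^ n ≠ 0 := by positivity
  field_simp

lemma avg_key (t : ℝ) (ht0 : 0 ≤ t) (n : ℕ) (hn : 1 ≤ n) :
    (1 / 2 ^ n : ℝ) * ∑ τ : Fin n → Bool,
        Real.exp (t * n * ((1 / (n : ℝ)) * ∑ i, sgn (τ i)) ^ 2 / 2)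
      = (Real.sqrt (2 * Real.pi))⁻¹ *
        ∫ x : ℝ, Real.cosh (Real.sqrt (t / n) * x) ^ n * Real.exp (-(1/2) * x ^ 2) := by
  have hn0 : (0:ℝ) < n := by exact_mod_cast hn
  set c := Real.sqrt (t / n) with hc
  have hc2 : c ^ 2 = t / n := Real.sq_sqrt (by positivity)
  have hsqrt : Real.sqrt (2 * Real.pi) ≠ 0 := by positivity
  have hexp : ∀ S : ℝ, Real.exp (t * n * ((1 / (n:ℝ)) * S) ^ 2 / 2)
      = (Real.sqrt (2 * Real.pi))⁻¹ * ∫ x : ℝ, Real.exp (c * S * x - x ^ 2 / 2) := by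
    intro S
    rw [integral_exp_linear_quad, inv_mul_cancel_left₀ hsqrt]
    congr 1
    rw [show (c*S)^2 = c^2 * S^2 by ring, hc2]
    field_simp
  have hpt : ∀ x : ℝ,
      ∑ τ : Fin n → Bool, Real.exp (c * (∑ i, sgn (τ i)) * x - x ^ 2 / 2)
      = 2 ^ n * (Real.cosh (c * x) ^ n * Real.exp (-(1/2) * x ^ 2)) := by
    intro x
    have h1 : ∀ τ : Fin n → Bool, Real.exp (c * (∑ i, sgn (τ i)) * x - x ^ 2 / 2)
        = (∏ i, Real.exp (c * x * sgn (τ i))) * Real.exp (-(1/2) * x ^ 2) := by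
      intro τ
      rw [← Real.exp_sum, ← Real.exp_add]
      congr 1
      rw [← Finset.mul_sum]
      ring
    rw [Finset.sum_congr rfl fun τ _ => h1 τ, ← Finset.sum_mul,
      ← Fintype.sum_pow (fun b => Real.exp (c * x * sgn b)) n]
    have h2 : (∑ b : Bool, Real.exp (c * x * sgn b)) = 2 * Real.cosh (c * x) := by
      rw [Fintype.sum_bool]
      norm_num [sgn, Real.cosh_eq]
      ring
    rw [h2, mul_pow]
    ring
  calc (1 / 2 ^ n : ℝ) * ∑ τ : Fin n → Bool,
        Real.exp (t * n * ((1 / (n : ℝ)) * ∑ i, sgn (τ i)) ^ 2 / 2)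
      = (1 / 2 ^ n : ℝ) * ∑ τ : Fin n → Bool, ((Real.sqrt (2 * Real.pi))⁻¹ *
          ∫ x : ℝ, Real.exp (c * (∑ i, sgn (τ i)) * x - x ^ 2 / 2)) := by
        rw [Finset.sum_congr rfl fun τ _ => hexp _]
    _ = (1 / 2 ^ n : ℝ) * (Real.sqrt (2 * Real.pi))⁻¹ *
          ∑ τ : Fin n → Bool, ∫ x : ℝ, Real.exp (c * (∑ i, sgn (τ i)) * x - x ^ 2 / 2) := by
        rw [← Finset.mul_sum]; ring
    _ = (1 / 2 ^ n : ℝ) * (Real.sqrt (2 * Real.pi))⁻¹ *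
          ∫ x : ℝ, ∑ τ : Fin n → Bool, Real.exp (c * (∑ i, sgn (τ i)) * x - x ^ 2 / 2) := by
        rw [MeasureTheory.integral_finset_sum _ (fun τ _ => integrable_exp_linear_quad _)]
    _ = (1 / 2 ^ n : ℝ) * (Real.sqrt (2 * Real.pi))⁻¹ *
          ∫ x : ℝ, 2 ^ n * (Real.cosh (c * x) ^ n * Real.exp (-(1/2) * x ^ 2)) := by
        simp_rw [hpt]
    _ = (Real.sqrt (2 * Real.pi))⁻¹ *
          ∫ x : ℝ, Real.cosh (c * x) ^ n * Real.exp (-(1/2) * x ^ 2) := by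
        rw [MeasureTheory.integral_const_mul]
        have h2n : (2:ℝ) ^ n ≠ 0 := by positivity
        field_simp

lemma avg_G_tendsto (t : ℝ) (ht0 : 0 ≤ t) (ht1 : t < 1) :
    Tendsto (fun n : ℕ => (Real.sqrt (2 * Real.pi))⁻¹ *
        ∫ x : ℝ, Real.cosh (Real.sqrt (t / n) * x) ^ n * Real.exp (-(1/2) * x ^ 2))
      atTop (nhds (1 / Real.sqrt (1 - t))) := by
  have hbound_int : MeasureTheory.Integrable (fun x : ℝ => Real.exp (-((1 - t)/2) * x ^ 2)) :=
    integrable_exp_neg_mul_sq (by linarith)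
  have hint : Tendsto (fun n : ℕ =>
      ∫ x : ℝ, Real.cosh (Real.sqrt (t / n) * x) ^ n * Real.exp (-(1/2) * x ^ 2))
      atTop (nhds (∫ x : ℝ, Real.exp (-((1 - t)/2) * x ^ 2))) := by
    apply MeasureTheory.tendsto_integral_filter_of_dominated_convergence
      (fun x => Real.exp (-((1 - t)/2) * x ^ 2)) _ _ hbound_int
    · -- pointwise limit
      filter_upwards with x
      have harg : ∀ n : ℕ, Real.sqrt (t / n) * x = (Real.sqrt t * x) / Real.sqrt n := by
        intro n; rw [Real.sqrt_div ht0]; ring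
      have hlim := (pow_cosh_tendsto (Real.sqrt t * x)).mul_const (Real.exp (-(1/2) * x ^ 2))
      simp_rw [harg]
      convert hlim using 1
      rw [← Real.exp_add]
      congr 1
      rw [mul_pow, Real.sq_sqrt ht0]
      ring
    · -- measurability
      filter_upwards with n
      exact Continuous.aestronglyMeasurable (by fun_prop)
    · -- bound
      filter_upwards [eventually_ge_atTop 1] with n hn
      filter_upwards with x
      have hn0 : (0:ℝ) < n := by exact_mod_cast hn
      have hc2 : Real.sqrt (t / n) ^ 2 = t / n := Real.sq_sqrt (by positivity)
      rw [Real.norm_eq_abs, abs_of_nonneg (by positivity)]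
      calc Real.cosh (Real.sqrt (t / n) * x) ^ n * Real.exp (-(1/2) * x ^ 2)
          ≤ Real.exp ((Real.sqrt (t / n) * x) ^ 2 / 2) ^ n * Real.exp (-(1/2) * x ^ 2) := by
            exact mul_le_mul_of_nonneg_right
              (pow_le_pow_left₀ (Real.cosh_pos _).le (Real.cosh_le_exp_half_sq _) n)
              (Real.exp_pos _).le
        _ = Real.exp (-((1 - t)/2) * x ^ 2) := by
            rw [← Real.exp_nat_mul, ← Real.exp_add]
            congr 1
            rw [mul_pow, hc2]
            field_simp
            ring
  have hfinal := hint.const_mul (Real.sqrt (2 * Real.pi))⁻¹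
  have hsqrt : Real.sqrt (2 * Real.pi) ≠ 0 := by positivity
  have hval : (Real.sqrt (2 * Real.pi))⁻¹ * ∫ x : ℝ, Real.exp (-((1 - t)/2) * x ^ 2)
      = 1 / Real.sqrt (1 - t) := by
    rw [integral_gaussian,
      show Real.pi / ((1 - t)/2) = (2 * Real.pi) / (1 - t) by rw [div_div_eq_mul_div]; ring,
      Real.sqrt_div (by positivity) (1 - t)]
    have h1t : Real.sqrt (1 - t) ≠ 0 := by
      have : (0:ℝ) < 1 - t := by linarith
      positivity
    field_simp
  convert hfinal using 2
  exact hval.symm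

end Helpers

theorem average_exp_overlap_tendsto (t : ℝ) (ht0 : 0 ≤ t) (ht1 : t < 1) :
    Tendsto (fun n : ℕ =>
        (1 / 2 ^ (2 * n)) * ∑ σ : Fin n → Bool, ∑ τ : Fin n → Bool,
          Real.exp (t * n * ((1 / (n : ℝ)) * ∑ i, sgn (σ i) * sgn (τ i)) ^ 2 / 2))
      atTop (nhds (1 / Real.sqrt (1 - t))) := by
  refine Tendsto.congr' ?_ (avg_G_tendsto t ht0 ht1)
  filter_upwards [eventually_ge_atTop 1] with n hn
  exact ((avg_stepA t n).trans (avg_key t ht0 n hn)).symm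
end

section
/- Given a closed word w₃ = (α₁, …, α_L) (with α_L = α₁), every pair of closed words (w₁, w₂) that the merging step of the embedding algorithm maps to w₃ is uniquely determined by a choice of three positions i₁ < i₂ < i₃ in {1,…,L} with α_{i₁} = α_{i₃}; hence the number of such pairs is at most L³. -/
theorem merge_reconstruction_cubic_bound
    {α : Type*} (w₃ : List α) (hclosed : w₃.head? = w₃.getLast?) :
    Set.ncard {p : List α × List α |
      ∃ i₁ i₂ i₃ : Fin w₃.length, i₁ < i₂ ∧ i₂ < i₃ ∧
        w₃.get i₁ = w₃.get i₃ ∧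
        p.1 = w₃.take ((i₁ : ℕ) + 1) ++ w₃.drop ((i₃ : ℕ) + 1) ∧
        p.2 = (w₃.drop (i₂ : ℕ)).take ((i₃ : ℕ) - (i₂ : ℕ) + 1) ++
          (w₃.drop ((i₁ : ℕ) + 1)).take ((i₂ : ℕ) - (i₁ : ℕ))} ≤
      w₃.length ^ 3 := by
  set L := w₃.length with hL
  set f : Fin L × Fin L × Fin L → List α × List α := fun t =>
    (w₃.take ((t.1 : ℕ) + 1) ++ w₃.drop ((t.2.2 : ℕ) + 1),
     (w₃.drop (t.2.1 : ℕ)).take ((t.2.2 : ℕ) - (t.2.1 : ℕ) + 1) ++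
       (w₃.drop ((t.1 : ℕ) + 1)).take ((t.2.1 : ℕ) - (t.1 : ℕ))) with hf
  have hsub : {p : List α × List α |
      ∃ i₁ i₂ i₃ : Fin L, i₁ < i₂ ∧ i₂ < i₃ ∧
        w₃.get i₁ = w₃.get i₃ ∧
        p.1 = w₃.take ((i₁ : ℕ) + 1) ++ w₃.drop ((i₃ : ℕ) + 1) ∧
        p.2 = (w₃.drop (i₂ : ℕ)).take ((i₃ : ℕ) - (i₂ : ℕ) + 1) ++
          (w₃.drop ((i₁ : ℕ) + 1)).take ((i₂ : ℕ) - (i₁ : ℕ))} ⊆ Set.range f := by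
    rintro ⟨p1, p2⟩ ⟨i₁, i₂, i₃, _, _, _, h1, h2⟩
    exact ⟨(i₁, i₂, i₃), by simp [hf, h1.symm, h2.symm]⟩
  calc Set.ncard _ ≤ (Set.range f).ncard :=
        Set.ncard_le_ncard hsub (Set.finite_range f)
    _ = (f '' Set.univ).ncard := by rw [Set.image_univ]
    _ ≤ (Set.univ : Set (Fin L × Fin L × Fin L)).ncard :=
        Set.ncard_image_le Set.finite_univ
    _ = L ^ 3 := by
        simp [Set.ncard_univ, Nat.card_eq_fintype_card]
        ring
end
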